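/- arXiv:2011.02854 — 3 statements merged into one kernel-verified Lean document; each statement's English description precedes it below -/
import Mathlib

section
/- Let J be the linear endomorphism of 𝔥₆ determined by J(e₁) = e₄, J(e₂) = e₃, J(e₅) = e₆, J(e₄) = -e₁, J(e₃) = -e₂, J(e₆) = -e₅. Then J² = -id and the Nijenhuis tensor of J vanishes identically, i.e. N_J(X,Y) = 0 for all X, Y ∈ 𝔥₆; in other words, J is an integrable complex structure on 𝔥₆. -/
open Matrix

/-- The Lie bracket of the nilpotent Lie algebra 𝔥₆ = (0,0,0,0,12,13) in the basis
e₁,…,e₆ (identified with `Fin 6 → ℝ`): the only nonzero brackets among basis vectors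
are [e₁,e₂] = -e₅ and [e₁,e₃] = -e₆. -/
def h6bracket (x y : Fin 6 → ℝ) : Fin 6 → ℝ :=
  ![0, 0, 0, 0, -(x 0 * y 1 - x 1 * y 0), -(x 0 * y 2 - x 2 * y 0)]

/-- The almost complex structure `J` on 𝔥₆ determined by J e₁ = e₄, J e₂ = e₃,
J e₅ = e₆, J e₄ = -e₁, J e₃ = -e₂, J e₆ = -e₅ (the j-th column is J(e_j)). -/
def J6 : Matrix (Fin 6) (Fin 6) ℝ :=
  !![0, 0, 0, -1, 0, 0;
     0, 0, -1, 0, 0, 0;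
     0, 1, 0, 0, 0, 0;
     1, 0, 0, 0, 0, 0;
     0, 0, 0, 0, 0, -1;
     0, 0, 0, 0, 1, 0]

/-- The Nijenhuis tensor N_J(X,Y) = [JX,JY] - J[JX,Y] - J[X,JY] - [X,Y] on 𝔥₆. -/
def nijenhuisH6 (J : Matrix (Fin 6) (Fin 6) ℝ) (x y : Fin 6 → ℝ) : Fin 6 → ℝ :=
  h6bracket (J.mulVec x) (J.mulVec y) - J.mulVec (h6bracket (J.mulVec x) y)
    - J.mulVec (h6bracket x (J.mulVec y)) - h6bracket x y

lemma cons_val_five' {α : Type*} {m : ℕ} (x : α) (u : Fin m.succ.succ.succ.succ.succ → α) :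
    Matrix.vecCons x u 5 = Matrix.vecHead (Matrix.vecTail (Matrix.vecTail
      (Matrix.vecTail (Matrix.vecTail u)))) :=
  rfl

lemma J6_mulVec (x : Fin 6 → ℝ) :
    J6.mulVec x = ![-(x 3), -(x 2), x 1, x 0, -(x 5), x 4] := by
  funext i
  fin_cases i <;>
    simp [J6, Matrix.mulVec, dotProduct, Fin.sum_univ_six,
      cons_val_five', Matrix.vecHead, Matrix.vecTail]

set_option maxHeartbeats 2000000 in
/-- The almost complex structure J on 𝔥₆ with J e₁ = e₄, J e₂ = e₃, J e₅ = e₆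
satisfies J² = -id and has vanishing Nijenhuis tensor, i.e. it is an integrable
complex structure on 𝔥₆. -/
theorem J6_squared_neg_one_and_nijenhuis_vanishes :
    J6 * J6 = -1 ∧ ∀ x y : Fin 6 → ℝ, nijenhuisH6 J6 x y = 0 := by
  constructor
  · ext i j
    fin_cases i <;> fin_cases j <;>
      simp [J6, Matrix.mul_apply, Fin.sum_univ_six,
        cons_val_five', Matrix.vecHead, Matrix.vecTail]
  · intro x y
    simp only [nijenhuisH6, J6_mulVec, h6bracket, Matrix.cons_val_zero,
      Matrix.cons_val_one, Matrix.cons_val_two, cons_val_three, cons_val_four,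
      cons_val_five', Matrix.vecHead, Matrix.vecTail, Function.comp_apply]
    funext i
    fin_cases i <;>
      simp [cons_val_five', Matrix.vecHead, Matrix.vecTail] <;> ring
end

section
/- Let f be an automorphism of 𝔥₆ and let (a_{ij}) be its matrix in the basis e₁,…,e₆ (so the j-th column of (a_{ij}) is f(e_j)). Then: a_{1j} = 0 for all j = 2,…,6; a_{2j} = a_{3j} = 0 for j = 4,5,6; a_{45} = a_{46} = 0; a_{55} = a₁₁a₂₂, a_{56} = a₁₁a₂₃, a_{65} = a₁₁a₃₂, and a_{66} = a₁₁a₃₃. -/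
open Matrix

/-- An automorphism of 𝔥₆, identified with its matrix in the basis e₁,…,e₆
(the j-th column of the matrix is f(e_j)). -/
def IsAutH6 (f : Matrix (Fin 6) (Fin 6) ℝ) : Prop :=
  IsUnit f ∧ ∀ x y : Fin 6 → ℝ, f.mulVec (h6bracket x y) = h6bracket (f.mulVec x) (f.mulVec y)

lemma cv5 {α : Type*} (a b c d e f : α) : ![a,b,c,d,e,f] 5 = f := rfl

set_option maxHeartbeats 1600000 in
/-- Lemma 4.2: constraints on the matrix entries (a_{ij}) = (f (i-1) (j-1)) of an
automorphism f of 𝔥₆. -/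
theorem aut_h6_matrix_entries (f : Matrix (Fin 6) (Fin 6) ℝ) (hf : IsAutH6 f) :
    (∀ j : Fin 6, j ≠ 0 → f 0 j = 0) ∧
    (f 1 3 = 0 ∧ f 1 4 = 0 ∧ f 1 5 = 0) ∧
    (f 2 3 = 0 ∧ f 2 4 = 0 ∧ f 2 5 = 0) ∧
    (f 3 4 = 0 ∧ f 3 5 = 0) ∧
    f 4 4 = f 0 0 * f 1 1 ∧ f 4 5 = f 0 0 * f 1 2 ∧
    f 5 4 = f 0 0 * f 2 1 ∧ f 5 5 = f 0 0 * f 2 2 := by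
  obtain ⟨hunit, hb⟩ := hf
  obtain ⟨g, hfg, hgf⟩ := isUnit_iff_exists.mp hunit
  have hsurj : ∀ z : Fin 6 → ℝ, f.mulVec (g.mulVec z) = z := by
    intro z; rw [Matrix.mulVec_mulVec, hfg, Matrix.one_mulVec]
  -- equations from [e₁,e₂]
  have hE01 := hb ![1,0,0,0,0,0] ![0,1,0,0,0,0]
  have h04 : f 0 4 = 0 := by
    have := congrFun hE01 0
    simp [h6bracket, mulVec, dotProduct, Fin.sum_univ_six, cv5] at this; linarith
  have h14 : f 1 4 = 0 := by
    have := congrFun hE01 1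
    simp [h6bracket, mulVec, dotProduct, Fin.sum_univ_six, cv5] at this; linarith
  have h24 : f 2 4 = 0 := by
    have := congrFun hE01 2
    simp [h6bracket, mulVec, dotProduct, Fin.sum_univ_six, cv5] at this; linarith
  have h34 : f 3 4 = 0 := by
    have := congrFun hE01 3
    simp [h6bracket, mulVec, dotProduct, Fin.sum_univ_six, cv5] at this; linarith
  have h44 : f 4 4 = f 0 0 * f 1 1 - f 1 0 * f 0 1 := by
    have := congrFun hE01 4
    simp [h6bracket, mulVec, dotProduct, Fin.sum_univ_six, cv5] at this; linarith
  have h54 : f 5 4 = f 0 0 * f 2 1 - f 2 0 * f 0 1 := by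
    have := congrFun hE01 5
    simp [h6bracket, mulVec, dotProduct, Fin.sum_univ_six, cv5] at this; linarith
  -- equations from [e₁,e₃]
  have hE02 := hb ![1,0,0,0,0,0] ![0,0,1,0,0,0]
  have h05 : f 0 5 = 0 := by
    have := congrFun hE02 0
    simp [h6bracket, mulVec, dotProduct, Fin.sum_univ_six, cv5] at this; linarith
  have h15 : f 1 5 = 0 := by
    have := congrFun hE02 1
    simp [h6bracket, mulVec, dotProduct, Fin.sum_univ_six, cv5] at this; linarith
  have h25 : f 2 5 = 0 := by
    have := congrFun hE02 2
    simp [h6bracket, mulVec, dotProduct, Fin.sum_univ_six, cv5] at this; linarith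
  have h35 : f 3 5 = 0 := by
    have := congrFun hE02 3
    simp [h6bracket, mulVec, dotProduct, Fin.sum_univ_six, cv5] at this; linarith
  have h45 : f 4 5 = f 0 0 * f 1 2 - f 1 0 * f 0 2 := by
    have := congrFun hE02 4
    simp [h6bracket, mulVec, dotProduct, Fin.sum_univ_six, cv5] at this; linarith
  have h55 : f 5 5 = f 0 0 * f 2 2 - f 2 0 * f 0 2 := by
    have := congrFun hE02 5
    simp [h6bracket, mulVec, dotProduct, Fin.sum_univ_six, cv5] at this; linarith
  -- equations from [e₂,e₃] = 0
  have hE12 := hb ![0,1,0,0,0,0] ![0,0,1,0,0,0]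
  have r1 : f 0 1 * f 1 2 - f 1 1 * f 0 2 = 0 := by
    have := congrFun hE12 4
    simp [h6bracket, mulVec, dotProduct, Fin.sum_univ_six, cv5] at this; linarith
  have r2 : f 0 1 * f 2 2 - f 2 1 * f 0 2 = 0 := by
    have := congrFun hE12 5
    simp [h6bracket, mulVec, dotProduct, Fin.sum_univ_six, cv5] at this; linarith
  -- column 3 (image of central e₄) via surjectivity
  have hE3w0 := hb ![0,0,0,1,0,0] (g.mulVec ![1,0,0,0,0,0])
  rw [hsurj ![1,0,0,0,0,0]] at hE3w0
  have h13 : f 1 3 = 0 := by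
    have := congrFun hE3w0 4
    simp [h6bracket, mulVec, dotProduct, Fin.sum_univ_six, cv5] at this; linarith
  have h23 : f 2 3 = 0 := by
    have := congrFun hE3w0 5
    simp [h6bracket, mulVec, dotProduct, Fin.sum_univ_six, cv5] at this; linarith
  have hE3w1 := hb ![0,0,0,1,0,0] (g.mulVec ![0,1,0,0,0,0])
  rw [hsurj ![0,1,0,0,0,0]] at hE3w1
  have h03 : f 0 3 = 0 := by
    have := congrFun hE3w1 4
    simp [h6bracket, mulVec, dotProduct, Fin.sum_univ_six, cv5] at this; linarith
  -- top-left 3×3 block is invertible, forcing f 0 1 = f 0 2 = 0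
  have H : ∀ i j : Fin 6, (f * g) i j = (1 : Matrix (Fin 6) (Fin 6) ℝ) i j := by
    intro i j; rw [hfg]
  have hAB : (!![f 0 0, f 0 1, f 0 2; f 1 0, f 1 1, f 1 2; f 2 0, f 2 1, f 2 2] *
      !![g 0 0, g 0 1, g 0 2; g 1 0, g 1 1, g 1 2; g 2 0, g 2 1, g 2 2]
      : Matrix (Fin 3) (Fin 3) ℝ) = 1 := by
    have e00 := H 0 0; have e01 := H 0 1; have e02 := H 0 2
    have e10 := H 1 0; have e11 := H 1 1; have e12 := H 1 2
    have e20 := H 2 0; have e21 := H 2 1; have e22 := H 2 2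
    simp [Matrix.mul_apply, Fin.sum_univ_six, Matrix.one_apply, h03, h04, h05,
      h13, h14, h15, h23, h24, h25] at e00 e01 e02 e10 e11 e12 e20 e21 e22
    ext i j
    fin_cases i <;> fin_cases j <;>
      simp [Matrix.mul_apply, Fin.sum_univ_three, Matrix.one_apply] <;> linarith
  have hBA := mul_eq_one_comm.mp hAB
  have hker : (!![f 0 0, f 0 1, f 0 2; f 1 0, f 1 1, f 1 2; f 2 0, f 2 1, f 2 2]
      : Matrix (Fin 3) (Fin 3) ℝ).mulVec ![0, f 0 2, -(f 0 1)] = 0 := by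
    ext i
    fin_cases i <;>
      · simp [mulVec, dotProduct, Fin.sum_univ_three]
        nlinarith [r1, r2]
  have hv0 : (![0, f 0 2, -(f 0 1)] : Fin 3 → ℝ) = 0 := by
    have h := congrArg (!![g 0 0, g 0 1, g 0 2; g 1 0, g 1 1, g 1 2; g 2 0, g 2 1, g 2 2]
      : Matrix (Fin 3) (Fin 3) ℝ).mulVec hker
    rwa [Matrix.mulVec_mulVec, hBA, Matrix.one_mulVec, Matrix.mulVec_zero] at h
  have h02 : f 0 2 = 0 := by have := congrFun hv0 1; simpa using this
  have h01 : f 0 1 = 0 := by have := congrFun hv0 2; simpa using this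
  refine ⟨?_, ⟨h13, h14, h15⟩, ⟨h23, h24, h25⟩, ⟨h34, h35⟩, ?_, ?_, ?_, ?_⟩
  · intro j hj
    fin_cases j
    · exact absurd rfl hj
    · exact h01
    · exact h02
    · exact h03
    · exact h04
    · exact h05
  · rw [h44, h01]; ring
  · rw [h45, h02]; ring
  · rw [h54, h01]; ring
  · rw [h55, h02]; ring
end

section
/- Let J be the complex structure on 𝔥₆ with J(e₁) = e₄, J(e₂) = e₃, J(e₅) = e₆. An automorphism f of 𝔥₆ commutes with J (i.e. f∘J = J∘f) if and only if the matrix of f in the basis e₁,…,e₆ has the form with rows: (a₁₁, 0, 0, 0, 0, 0), (0, a₂₂, a₂₃, 0, 0, 0), (0, -a₂₃, a₂₂, 0, 0, 0), (0, 0, 0, a₁₁, 0, 0), (a₅₁, a₅₂, -a₆₂, -a₆₁, a₁₁a₂₂, a₁₁a₂₃), (a₆₁, a₆₂, a₅₂, a₅₁, -a₁₁a₂₃, a₁₁a₂₂), where a₁₁ ≠ 0 and a₂₂² + a₂₃² ≠ 0. Moreover, every invertible linear map of this form is an automorphism of 𝔥₆. -/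
open Matrix

/-- The matrix form (3) appearing in Lemma 4.3. -/
def isotropyForm (a11 a22 a23 a51 a52 a61 a62 : ℝ) : Matrix (Fin 6) (Fin 6) ℝ :=
  !![a11, 0, 0, 0, 0, 0;
     0, a22, a23, 0, 0, 0;
     0, -a23, a22, 0, 0, 0;
     0, 0, 0, a11, 0, 0;
     a51, a52, -a62, -a61, a11 * a22, a11 * a23;
     a61, a62, a52, a51, -(a11 * a23), a11 * a22]

/-!
An automorphism `f` preserves the centre `⟨e₄, e₅, e₆⟩`. If `f` commutes with `J`, it is
determined by `u = f e₁`, `x = f e₂` and `f e₅`, through `f e₄ = J u`, `f e₃ = J x`,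
`f e₆ = J (f e₅)`. Centrality of `J u` forces `u ∈ ⟨e₁, e₅, e₆⟩`, so
`f e₅ = -[u, x] = u₁ (x₂ e₅ + x₃ e₆)`, which is nonzero by invertibility; this gives
`u₁ ≠ 0` and `x₂² + x₃² ≠ 0`. Finally `[x, J x] = f [e₂, e₃] = 0` kills the `e₁`- and
`e₄`-components of `x`. The converse is a direct computation.
-/

lemma Matrix.col_ne_zero_of_isUnit {n K : Type*} [Fintype n] [DecidableEq n] [Field K]
    {M : Matrix n n K} (hM : IsUnit M) (j : n) : M.col j ≠ 0 := by
  rw [← mulVec_single_one]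
  intro h
  exact Pi.single_ne_zero_iff.2 one_ne_zero <|
    mulVec_injective_iff_isUnit.2 hM (h.trans (mulVec_zero M).symm)

lemma Matrix.col_eq_mulVec_col_of_commute {n R : Type*} [Fintype n] [DecidableEq n]
    [Semiring R] {M J : Matrix n n R} (hMJ : Commute M J) {j j' : n}
    (hJ : J.col j = Pi.single j' 1) : M.col j' = J *ᵥ M.col j := by
  rw [← mulVec_single_one, ← mulVec_single_one, ← hJ, ← mulVec_single_one, mulVec_mulVec,
    hMJ.eq, ← mulVec_mulVec]

lemma J6_mulVec_s2 (v : Fin 6 → ℝ) : J6 *ᵥ v = ![-v 3, -v 2, v 1, v 0, -v 5, v 4] := by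
  ext i
  fin_cases i <;> simp [J6, mulVec, dotProduct, Fin.sum_univ_six]

lemma forall_h6bracket_eq_zero_iff (z : Fin 6 → ℝ) :
    (∀ x, h6bracket x z = 0) ↔ z 0 = 0 ∧ z 1 = 0 ∧ z 2 = 0 := by
  refine ⟨fun h => ?_, fun ⟨h₀, h₁, h₂⟩ x => by simp [h6bracket, h₀, h₁, h₂]⟩
  have h₀ : z 0 = 0 := by simpa [h6bracket] using congrFun (h (Pi.single 1 1)) 4
  have h₁ : z 1 = 0 := by simpa [h6bracket] using congrFun (h (Pi.single 0 1)) 4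
  have h₂ : z 2 = 0 := by simpa [h6bracket] using congrFun (h (Pi.single 0 1)) 5
  exact ⟨h₀, h₁, h₂⟩

lemma h6bracket_single_zero_one :
    h6bracket (Pi.single 0 1) (Pi.single 1 1) = -Pi.single 4 1 := by
  ext i; fin_cases i <;> simp [h6bracket]

lemma h6bracket_single_one_two : h6bracket (Pi.single 1 1) (Pi.single 2 1) = 0 := by
  ext i; fin_cases i <;> simp [h6bracket]

lemma h6bracket_J6_mulVec (x : Fin 6 → ℝ) :
    h6bracket x (J6 *ᵥ x) = ![0, 0, 0, 0, x 0 * x 2 - x 1 * x 3, -(x 0 * x 1 + x 2 * x 3)] := by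
  simp only [h6bracket, J6_mulVec_s2]
  ext i
  fin_cases i <;> simp; ring

lemma eq_zero_of_h6bracket_J6_mulVec_eq_zero {x : Fin 6 → ℝ} (h : h6bracket x (J6 *ᵥ x) = 0)
    (hx : x 1 ^ 2 + x 2 ^ 2 ≠ 0) : x 0 = 0 ∧ x 3 = 0 := by
  rw [h6bracket_J6_mulVec] at h
  have h₄ : x 0 * x 2 - x 1 * x 3 = 0 := congrFun h 4
  have h₅ : -(x 0 * x 1 + x 2 * x 3) = 0 := congrFun h 5
  constructor
  · refine (mul_eq_zero.1 ?_).resolve_left hx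
    linear_combination x 2 * h₄ - x 1 * h₅
  · refine (mul_eq_zero.1 ?_).resolve_left hx
    linear_combination -(x 1 * h₄) - x 2 * h₅

namespace IsAutH6

variable {f : Matrix (Fin 6) (Fin 6) ℝ}

lemma h6bracket_mulVec_eq_zero (hf : IsAutH6 f) {z : Fin 6 → ℝ} (hz : ∀ x, h6bracket x z = 0)
    (y : Fin 6 → ℝ) : h6bracket y (f *ᵥ z) = 0 := by
  obtain ⟨x, rfl⟩ := mulVec_surjective_iff_isUnit.2 hf.1 y
  rw [← hf.2, hz, mulVec_zero]

lemma h6bracket_col (hf : IsAutH6 f) (i j : Fin 6) :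
    h6bracket (f.col i) (f.col j) = f *ᵥ h6bracket (Pi.single i 1) (Pi.single j 1) := by
  rw [hf.2, mulVec_single_one, mulVec_single_one]

lemma exists_eq_isotropyForm (hf : IsAutH6 f) (hJ : f * J6 = J6 * f) :
    ∃ a11 a22 a23 a51 a52 a61 a62 : ℝ, a11 ≠ 0 ∧ a22 ^ 2 + a23 ^ 2 ≠ 0 ∧
      f = isotropyForm a11 a22 a23 a51 a52 a61 a62 := by
  set u := f.col 0 with hu_def
  set x := f.col 1 with hx_def
  have hcol2 : f.col 2 = J6 *ᵥ x :=
    col_eq_mulVec_col_of_commute hJ (by ext i; fin_cases i <;> rfl)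
  have hcol3 : f.col 3 = J6 *ᵥ u :=
    col_eq_mulVec_col_of_commute hJ (by ext i; fin_cases i <;> rfl)
  have hcol5 : f.col 5 = J6 *ᵥ f.col 4 :=
    col_eq_mulVec_col_of_commute hJ (by ext i; fin_cases i <;> rfl)
  -- `f e₄ = J (f e₁)` lies in the centre, since `e₄` does.
  have hu : u 3 = 0 ∧ u 2 = 0 ∧ u 1 = 0 := by
    have := (forall_h6bracket_eq_zero_iff _).1 (hf.h6bracket_mulVec_eq_zero
      ((forall_h6bracket_eq_zero_iff (Pi.single 3 1)).2 (by simp)))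
    simpa [mulVec_single_one, hcol3, J6_mulVec_s2] using this
  have hcol4 : f.col 4 = u 0 • ![0, 0, 0, 0, x 1, x 2] := by
    rw [← neg_neg (f.col 4), ← mulVec_single_one, ← mulVec_neg, ← h6bracket_single_zero_one,
      ← hf.h6bracket_col,
      ← hu_def, ← hx_def]
    ext i; fin_cases i <;> simp [h6bracket, hu]
  have hx : h6bracket x (J6 *ᵥ x) = 0 := by
    rw [← hcol2, hf.h6bracket_col, h6bracket_single_one_two, mulVec_zero]
  have hcol4_ne : f.col 4 ≠ 0 := col_ne_zero_of_isUnit hf.1 4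
  have hu0 : u 0 ≠ 0 := left_ne_zero_of_smul (hcol4 ▸ hcol4_ne)
  have hx12 : x 1 ^ 2 + x 2 ^ 2 ≠ 0 := by
    intro h
    have : x 1 = 0 ∧ x 2 = 0 := by constructor <;> nlinarith
    exact hcol4_ne (by simp [hcol4, this])
  obtain ⟨hx0, hx3⟩ := eq_zero_of_h6bracket_J6_mulVec_eq_zero hx hx12
  refine ⟨u 0, x 1, -x 2, u 4, x 4, u 5, x 5, hu0, by simpa using hx12,
    ext_of_mulVec_single fun j => ?_⟩
  clear_value u x
  rw [mulVec_single_one, mulVec_single_one]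
  fin_cases j <;>
    simp only [Fin.zero_eta, Fin.mk_one, Fin.reduceFinMk, ← hu_def, ← hx_def, hcol2, hcol3,
      hcol5, hcol4] <;>
    ext i <;> fin_cases i <;> simp [isotropyForm, J6_mulVec_s2, hu, hx0, hx3]

end IsAutH6

section isotropyForm

variable (a11 a22 a23 a51 a52 a61 a62 : ℝ)

lemma commute_isotropyForm_J6 : Commute (isotropyForm a11 a22 a23 a51 a52 a61 a62) J6 := by
  ext i j
  fin_cases i <;> fin_cases j <;> simp [isotropyForm, J6, mul_apply, Fin.sum_univ_six]

lemma det_isotropyForm :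
    (isotropyForm a11 a22 a23 a51 a52 a61 a62).det = (a11 ^ 2 * (a22 ^ 2 + a23 ^ 2)) ^ 2 := by
  simp [isotropyForm, det_succ_row_zero, Fin.sum_univ_succ, Fin.succAbove]
  ring

lemma isotropyForm_mulVec_h6bracket (x y : Fin 6 → ℝ) :
    isotropyForm a11 a22 a23 a51 a52 a61 a62 *ᵥ h6bracket x y =
      h6bracket (isotropyForm a11 a22 a23 a51 a52 a61 a62 *ᵥ x)
        (isotropyForm a11 a22 a23 a51 a52 a61 a62 *ᵥ y) := by
  ext i
  fin_cases i <;> simp [isotropyForm, h6bracket, mulVec, dotProduct, Fin.sum_univ_six] <;> ring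

lemma isAutH6_isotropyForm (h11 : a11 ≠ 0) (h23 : a22 ^ 2 + a23 ^ 2 ≠ 0) :
    IsAutH6 (isotropyForm a11 a22 a23 a51 a52 a61 a62) := by
  refine ⟨?_, isotropyForm_mulVec_h6bracket _ _ _ _ _ _ _⟩
  rw [isUnit_iff_isUnit_det, det_isotropyForm, isUnit_iff_ne_zero]
  exact pow_ne_zero _ (mul_ne_zero (pow_ne_zero _ h11) h23)

end isotropyForm

/-- Lemma 4.3: an automorphism f of 𝔥₆ commutes with J if and only if it has the
form `isotropyForm` with a₁₁ ≠ 0 and a₂₂² + a₂₃² ≠ 0; moreover, every (invertible)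
linear map of this form is an automorphism of 𝔥₆. -/
theorem aut_h6_commutes_with_J6_iff :
    (∀ f : Matrix (Fin 6) (Fin 6) ℝ, IsAutH6 f →
      (f * J6 = J6 * f ↔
        ∃ a11 a22 a23 a51 a52 a61 a62 : ℝ, a11 ≠ 0 ∧ a22 ^ 2 + a23 ^ 2 ≠ 0 ∧
          f = isotropyForm a11 a22 a23 a51 a52 a61 a62)) ∧
    (∀ a11 a22 a23 a51 a52 a61 a62 : ℝ, a11 ≠ 0 → a22 ^ 2 + a23 ^ 2 ≠ 0 →
      IsAutH6 (isotropyForm a11 a22 a23 a51 a52 a61 a62)) := by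
  refine ⟨fun f hf => ⟨hf.exists_eq_isotropyForm, ?_⟩, isAutH6_isotropyForm⟩
  rintro ⟨a11, a22, a23, a51, a52, a61, a62, -, -, rfl⟩
  exact commute_isotropyForm_J6 a11 a22 a23 a51 a52 a61 a62
end
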